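/- Let n ≥ 1, Q, Q̃ ∈ [0,1], and let E_{a,b,c} be Eve's (unnormalized) states of the depolarizing-channel dilation. Then all these states are mutually orthogonal except for the pair (E_{0,0⃗,0⃗}, E_{1,1⃗,1⃗}): for all triples (a,b,c) ≠ (a',b',c') in {0,1} × {0,1}^n × {0,1}^n such that {(a,b,c),(a',b',c')} ≠ {(0,0⃗,0⃗),(1,1⃗,1⃗)}, one has ⟨E_{a,b,c}, E_{a',b',c'}⟩ = 0. -/

import Mathlib

open scoped BigOperators

/-- The index type for `ℂ^{2^n} ⊗ ℂ^{2^n} ⊗ ℂ^{2^n} ⊗ ℂ^{2^n} ⊗ ℂ² ⊗ ℂ²`. -/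
abbrev EveIdx (n : ℕ) :=
  (Fin n → Bool) × (Fin n → Bool) × (Fin n → Bool) × (Fin n → Bool) × Bool × Bool

/-- The constant bit string `a⃗ = (a,…,a) ∈ {0,1}^n`. -/
def constStr (n : ℕ) (a : Bool) : Fin n → Bool := fun _ => a

instance eveIdxDecEq (n : ℕ) : DecidableEq (EveIdx n) := instDecidableEqProd

/-- Eve's (unnormalized) state `E_{a,b,c}` of the depolarizing-channel dilation:
`E_{a,b,c} = 2^{−(2n+1)/2} [ δ_{b,a⃗} δ_{c,b} √((1−Q)(1−Q̃)) (Σ_i |i i⟩)⊗(Σ_k |k k⟩)⊗|0 0⟩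
 + δ_{c,b} √(Q(1−Q̃)) |a⃗ b⟩⊗(Σ_k |k k⟩)⊗|1 0⟩
 + δ_{b,a⃗} √((1−Q)Q̃) (Σ_i |i i⟩)⊗|b c⟩⊗|0 1⟩
 + √(Q Q̃) |a⃗ b⟩⊗|b c⟩⊗|1 1⟩ ]`. -/
noncomputable def eveVec (n : ℕ) (Q Qt : ℝ) (a : Bool) (b c : Fin n → Bool) :
    EuclideanSpace ℂ (EveIdx n) :=
  ((Real.sqrt (2 ^ (2 * n + 1)) : ℝ) : ℂ)⁻¹ •
    ((if b = constStr n a ∧ c = b then ((Real.sqrt ((1 - Q) * (1 - Qt)) : ℝ) : ℂ) else 0) •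
        (∑ i : Fin n → Bool, ∑ k : Fin n → Bool,
          EuclideanSpace.single (i, i, k, k, false, false) (1 : ℂ)) +
      (if c = b then ((Real.sqrt (Q * (1 - Qt)) : ℝ) : ℂ) else 0) •
        (∑ k : Fin n → Bool,
          EuclideanSpace.single (constStr n a, b, k, k, true, false) (1 : ℂ)) +
      (if b = constStr n a then ((Real.sqrt ((1 - Q) * Qt) : ℝ) : ℂ) else 0) •
        (∑ i : Fin n → Bool,
          EuclideanSpace.single (i, i, b, c, false, true) (1 : ℂ)) +
      ((Real.sqrt (Q * Qt) : ℝ) : ℂ) •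
        EuclideanSpace.single (constStr n a, b, b, c, true, true) (1 : ℂ))

/-!
Apart from the exceptional pair, distinct states of Eve have disjoint supports. The last two
qubits pick out one of the four summands of `E_{a,b,c}`, and on each summand but the first the
coordinates determine `(a, b, c)` (for the third one via `b = a⃗`, which needs `n ≥ 1`). The
first summand is the same vector for every triple with `b = c = a⃗`, i.e. for `(0, 0⃗, 0⃗)` and
`(1, 1⃗, 1⃗)` only.
-/

theorem EuclideanSpace.inner_eq_zero_of_forall_eq_zero_or_eq_zero {𝕜 ι : Type*} [RCLike 𝕜]
    [Fintype ι] {v w : EuclideanSpace 𝕜 ι} (h : ∀ x, v x = 0 ∨ w x = 0) :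
    inner 𝕜 v w = 0 := by
  rw [PiLp.inner_apply]
  refine Finset.sum_eq_zero fun x _ => ?_
  rcases h x with h | h <;> simp [h]

lemma constStr_injective {n : ℕ} (hn : 0 < n) : Function.Injective (constStr n) :=
  fun _ _ h => congrFun h ⟨0, hn⟩

def eveSupport (n : ℕ) (a : Bool) (b c : Fin n → Bool) : EveIdx n → Prop
  | (i, j, k, l, false, false) => i = j ∧ k = l ∧ b = constStr n a ∧ c = b
  | (i, j, k, l, true, false) => i = constStr n a ∧ j = b ∧ k = l ∧ c = b
  | (i, j, k, l, false, true) => i = j ∧ k = b ∧ l = c ∧ b = constStr n a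
  | (i, j, k, l, true, true) => i = constStr n a ∧ j = b ∧ k = b ∧ l = c

lemma eveSupport_of_eveVec_apply_ne_zero {n : ℕ} {Q Qt : ℝ} {a : Bool} {b c : Fin n → Bool}
    {x : EveIdx n} (hx : eveVec n Q Qt a b c x ≠ 0) : eveSupport n a b c x := by
  contrapose! hx
  obtain ⟨i, j, k, l, s, t⟩ := x
  simp only [eveVec, PiLp.add_apply, PiLp.smul_apply, WithLp.ofLp_sum, Finset.sum_apply,
    PiLp.single_apply, Prod.mk.injEq, ite_and, smul_eq_mul, Finset.sum_ite_eq, Finset.mem_univ,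
    if_true]
  cases s <;> cases t <;> simp_all [eveSupport]

lemma eq_of_eveSupport_of_eveSupport {n : ℕ} (hn : 0 < n) {a a' : Bool}
    {b c b' c' : Fin n → Bool} {x : EveIdx n} (hx : eveSupport n a b c x)
    (hx' : eveSupport n a' b' c' x) :
    (a, b, c) = (a', b', c') ∨
      b = constStr n a ∧ c = b ∧ b' = constStr n a' ∧ c' = b' := by
  have hinj := constStr_injective hn
  obtain ⟨i, j, k, l, s, t⟩ := x
  cases s <;> cases t <;> simp only [eveSupport] at hx hx'
  case false.false =>
    obtain ⟨-, -, hb, hc⟩ := hx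
    obtain ⟨-, -, hb', hc'⟩ := hx'
    exact .inr ⟨hb, hc, hb', hc'⟩
  case true.false =>
    obtain ⟨rfl, rfl, -, rfl⟩ := hx
    obtain ⟨ha, rfl, -, rfl⟩ := hx'
    rw [hinj ha]
    exact .inl rfl
  case false.true =>
    obtain ⟨-, rfl, rfl, hb⟩ := hx
    obtain ⟨-, rfl, rfl, hb'⟩ := hx'
    rw [hinj (hb.symm.trans hb')]
    exact .inl rfl
  case true.true =>
    obtain ⟨rfl, rfl, -, rfl⟩ := hx
    obtain ⟨ha, rfl, -, rfl⟩ := hx'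
    rw [hinj ha]
    exact .inl rfl

theorem eveVec_orthogonal_general (n : ℕ) (hn : 1 ≤ n) (Q Qt : ℝ)
    (a a' : Bool) (b c b' c' : Fin n → Bool)
    (hne : (a, b, c) ≠ (a', b', c'))
    (hex1 : ¬((a, b, c) = (false, constStr n false, constStr n false) ∧
              (a', b', c') = (true, constStr n true, constStr n true)))
    (hex2 : ¬((a, b, c) = (true, constStr n true, constStr n true) ∧
              (a', b', c') = (false, constStr n false, constStr n false))) :
    (inner ℂ (eveVec n Q Qt a b c) (eveVec n Q Qt a' b' c') : ℂ) = 0 := by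
  refine EuclideanSpace.inner_eq_zero_of_forall_eq_zero_or_eq_zero fun x => ?_
  by_contra! ⟨hx, hx'⟩
  rcases eq_of_eveSupport_of_eveSupport hn (eveSupport_of_eveVec_apply_ne_zero hx)
    (eveSupport_of_eveVec_apply_ne_zero hx') with h | ⟨rfl, rfl, rfl, rfl⟩
  · exact hne h
  · cases a <;> cases a' <;> simp_all

/-- All of Eve's states are mutually orthogonal, apart from the pair
`(E_{0,0⃗,0⃗}, E_{1,1⃗,1⃗})`. -/
theorem eveVec_orthogonal (n : ℕ) (hn : 1 ≤ n) (Q Qt : ℝ)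
    (hQ0 : 0 ≤ Q) (hQ1 : Q ≤ 1) (hQt0 : 0 ≤ Qt) (hQt1 : Qt ≤ 1)
    (a a' : Bool) (b c b' c' : Fin n → Bool)
    (hne : (a, b, c) ≠ (a', b', c'))
    (hex1 : ¬((a, b, c) = (false, constStr n false, constStr n false) ∧
              (a', b', c') = (true, constStr n true, constStr n true)))
    (hex2 : ¬((a, b, c) = (true, constStr n true, constStr n true) ∧
              (a', b', c') = (false, constStr n false, constStr n false))) :
    (inner ℂ (eveVec n Q Qt a b c) (eveVec n Q Qt a' b' c') : ℂ) = 0 :=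
  eveVec_orthogonal_general n hn Q Qt a a' b c b' c' hne hex1 hex2
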